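/- Let X be a finite set, μ a probability distribution on X, ε ∈ [0,1), and γ : X → [0,1] a function with ∑_{x∈X} μ(x)·γ(x) ≥ 1 − ε. If m is a natural number with ∑_{x∈X} γ(x) ≤ 2^{2m}, then either 2^{2m} > |X|, or the set S of the 2^{2m} elements of X with largest μ-mass satisfies μ(S) ≥ 1 − ε, and hence 2m ≥ H_max^ε(μ) where H_max^ε(μ) = min { log₂ |T| : T ⊆ X, μ(T) ≥ 1 − ε }. -/

import Mathlib

/-!
Let `S` consist of the `|S|` points of largest mass and let `a = min_S μ ≥ 0`. Pointwise
`μ γ - μ 𝟙_S - a (γ - 𝟙_S) = (μ - a)(γ - 𝟙_S) ≤ 0`, since on `S` both `μ ≥ a` and `γ ≤ 1`,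
while off `S` both `μ ≤ a` and `γ ≥ 0`. Summing gives `∑ μ γ ≤ μ(S) + a (∑ γ - |S|) ≤ μ(S)`,
so `S` itself witnesses `H_max^ε(μ) ≤ log₂ |S|`.
-/

open Finset

section

variable {X R : Type*}

def IsTopSet [LinearOrder R] (μ : X → R) (S : Finset X) : Prop :=
  ∀ x ∈ S, ∀ y ∉ S, μ y ≤ μ x

theorem exists_isTopSet_card_eq [Fintype X] [LinearOrder R] (μ : X → R) {k : ℕ}
    (hk : k ≤ Fintype.card X) : ∃ S : Finset X, S.card = k ∧ IsTopSet μ S := by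
  classical
  induction k with
  | zero => exact ⟨∅, rfl, by simp [IsTopSet]⟩
  | succ n ih =>
    obtain ⟨S, hScard, hS⟩ := ih (Nat.le_of_succ_le hk)
    have hne : Sᶜ.Nonempty := by
      rw [← card_pos, card_compl, hScard]
      omega
    obtain ⟨y₀, hy₀, hmax⟩ := exists_max_image Sᶜ μ hne
    rw [mem_compl] at hy₀
    refine ⟨insert y₀ S, by rw [card_insert_of_notMem hy₀, hScard], ?_⟩
    intro x hx y hy
    rw [mem_insert, not_or] at hy
    rcases mem_insert.mp hx with rfl | hxS
    · exact hmax y (mem_compl.mpr hy.2)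
    · exact hS x hxS y hy.2

section Threshold

variable [Fintype X] [CommRing R] [LinearOrder R] [IsStrictOrderedRing R]

theorem sum_mul_le_sum_of_threshold {μ γ : X → R} {S : Finset X} {a : R} (ha : 0 ≤ a)
    (hS : ∀ x ∈ S, a ≤ μ x) (hSc : ∀ x ∉ S, μ x ≤ a)
    (hγ0 : ∀ x, 0 ≤ γ x) (hγ1 : ∀ x, γ x ≤ 1) (hγ : ∑ x, γ x ≤ S.card) :
    ∑ x, μ x * γ x ≤ ∑ x ∈ S, μ x := by
  classical
  calc ∑ x, μ x * γ x
      ≤ ∑ x, ((if x ∈ S then μ x else 0) + a * (γ x - if x ∈ S then 1 else 0)) := by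
        refine sum_le_sum fun x _ => ?_
        split_ifs with hx
        · nlinarith [hS x hx, hγ1 x]
        · nlinarith [hSc x hx, hγ0 x]
    _ = ∑ x ∈ S, μ x + a * (∑ x, γ x - S.card) := by
        simp only [sum_add_distrib, ← mul_sum, sum_sub_distrib, sum_ite_mem, univ_inter,
          sum_const, nsmul_one]
    _ ≤ ∑ x ∈ S, μ x :=
        add_le_of_nonpos_right (mul_nonpos_of_nonneg_of_nonpos ha (sub_nonpos.mpr hγ))

theorem sum_mul_le_sum_of_isTopSet {μ γ : X → R} {S : Finset X} (hS : IsTopSet μ S)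
    (hSne : S.Nonempty) (hμ0 : ∀ x, 0 ≤ μ x) (hγ0 : ∀ x, 0 ≤ γ x) (hγ1 : ∀ x, γ x ≤ 1)
    (hγ : ∑ x, γ x ≤ S.card) : ∑ x, μ x * γ x ≤ ∑ x ∈ S, μ x := by
  obtain ⟨x₀, hx₀, hmin⟩ := exists_min_image S μ hSne
  exact sum_mul_le_sum_of_threshold (hμ0 x₀) hmin (hS x₀ hx₀) hγ0 hγ1 hγ

end Threshold

theorem sInf_logb_card_le {P : Finset X → Prop} {S : Finset X} (hS : P S) :
    sInf {r : ℝ | ∃ T : Finset X, P T ∧ r = Real.logb 2 T.card} ≤ Real.logb 2 S.card := by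
  -- `0` is a lower bound also for `T = ∅`, as `Real.logb 2 0 = 0`.
  refine csInf_le ⟨0, ?_⟩ ⟨S, hS, rfl⟩
  rintro r ⟨T, -, rfl⟩
  exact div_nonneg (Real.log_natCast_nonneg _) (Real.log_nonneg one_le_two)

end

theorem stmt1_general {X : Type*} [Fintype X] (μ : X → ℝ)
    (hμ0 : ∀ x, 0 ≤ μ x) (ε : ℝ)
    (γ : X → ℝ) (hγ0 : ∀ x, 0 ≤ γ x) (hγ1 : ∀ x, γ x ≤ 1)
    (hsucc : 1 - ε ≤ ∑ x, μ x * γ x) (m : ℕ) (hm : ∑ x, γ x ≤ (2 : ℝ) ^ (2 * m)) :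
    2 ^ (2 * m) > Fintype.card X ∨
      ∃ S : Finset X, S.card = 2 ^ (2 * m) ∧
        (∀ x ∈ S, ∀ y ∉ S, μ y ≤ μ x) ∧
        (1 - ε ≤ ∑ x ∈ S, μ x) ∧
        sInf {r : ℝ | ∃ T : Finset X, 1 - ε ≤ ∑ x ∈ T, μ x ∧ r = Real.logb 2 T.card}
          ≤ 2 * m := by
  rcases lt_or_ge (Fintype.card X) (2 ^ (2 * m)) with hsmall | hlarge
  · exact Or.inl hsmall
  obtain ⟨S, hScard, hS⟩ := exists_isTopSet_card_eq μ hlarge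
  have hSne : S.Nonempty := by
    rw [← card_pos, hScard]
    positivity
  have hmass : 1 - ε ≤ ∑ x ∈ S, μ x :=
    hsucc.trans <| sum_mul_le_sum_of_isTopSet hS hSne hμ0 hγ0 hγ1 <| by
      rw [hScard]; exact_mod_cast hm
  refine Or.inr ⟨S, hScard, hS, hmass, ?_⟩
  calc _ ≤ Real.logb 2 S.card := sInf_logb_card_le hmass
    _ = 2 * m := by
      rw [hScard, Nat.cast_pow, Nat.cast_ofNat, Real.logb_pow, Real.logb_self_eq_one one_lt_two]
      push_cast
      ring

/-- combinatorial core of the Nayak–Salzman bound. If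
`∑ μ(x)γ(x) ≥ 1 - ε` and `∑ γ(x) ≤ 2^{2m}`, then either `2^{2m} > |X|`, or the
set of the `2^{2m}` most likely elements has mass `≥ 1 - ε`, and hence
`2m ≥ H_max^ε(μ)`. -/
theorem stmt1 {X : Type*} [Fintype X] [Nonempty X] (μ : X → ℝ)
    (hμ0 : ∀ x, 0 ≤ μ x) (hμ1 : ∑ x, μ x = 1) (ε : ℝ) (hε0 : 0 ≤ ε) (hε1 : ε < 1)
    (γ : X → ℝ) (hγ0 : ∀ x, 0 ≤ γ x) (hγ1 : ∀ x, γ x ≤ 1)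
    (hsucc : 1 - ε ≤ ∑ x, μ x * γ x) (m : ℕ) (hm : ∑ x, γ x ≤ (2 : ℝ) ^ (2 * m)) :
    2 ^ (2 * m) > Fintype.card X ∨
      ∃ S : Finset X, S.card = 2 ^ (2 * m) ∧
        (∀ x ∈ S, ∀ y ∉ S, μ y ≤ μ x) ∧
        (1 - ε ≤ ∑ x ∈ S, μ x) ∧
        sInf {r : ℝ | ∃ T : Finset X, 1 - ε ≤ ∑ x ∈ T, μ x ∧ r = Real.logb 2 T.card}
          ≤ 2 * m :=
  stmt1_general μ hμ0 ε γ hγ0 hγ1 hsucc m hm
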